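/- Let (X,d) be a Polish metric space and let M(X) be the space of Borel probability measures on X with the weak topology. For every α > 0, the set {μ ∈ M(X) : d̄_μ(x) ≥ α for μ-a.e. x ∈ X} (equivalently, {μ : dim_P^-(μ) ≥ α}) is a Gδ subset of M(X), and the set {μ ∈ M(X) : d̲_μ(x) = 0 for μ-a.e. x ∈ X} (equivalently, {μ : dim_H(μ) = 0}) is a Gδ subset of M(X). -/

import Mathlib

open Filter MeasureTheory Topology Metric Set
open scoped ENNReal NNReal

noncomputable section
attribute [local instance] Classical.propDecidable

/-- The full (bilateral) shift on the product space `ℤ → M`: `(T x) i = x (i - 1)`. -/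
def fullShift {M : Type*} (x : ℤ → M) : ℤ → M := fun i => x (i - 1)

/-- The metric `d(x,y) = ∑_{n ∈ ℤ} 2^{-|n|} ρ(xₙ,yₙ)/(1 + ρ(xₙ,yₙ))` on `ℤ → M`,
compatible with the product topology. -/
def shiftDist {M : Type*} [MetricSpace M] (x y : ℤ → M) : ℝ :=
  ∑' n : ℤ, (1 / 2 : ℝ) ^ n.natAbs * (dist (x n) (y n) / (1 + dist (x n) (y n)))

/-- Lower local dimension `d̲_μ(x) = liminf_{ε → 0⁺} log μ(B(x,ε)) / log ε` of `μ` at `x`,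
with respect to the distance function `d`; by convention it is `∞` if some ball
centered at `x` has measure zero. -/
def lowerLocalDim {X : Type*} [MeasurableSpace X] (d : X → X → ℝ)
    (μ : Measure X) (x : X) : ℝ≥0∞ :=
  if ∃ ε > 0, μ {y | d x y < ε} = 0 then ⊤
  else liminf (fun ε : ℝ =>
    ENNReal.ofReal (Real.log (μ {y | d x y < ε}).toReal / Real.log ε)) (𝓝[>] (0 : ℝ))

/-- Upper local dimension `d̄_μ(x) = limsup_{ε → 0⁺} log μ(B(x,ε)) / log ε`. -/
def upperLocalDim {X : Type*} [MeasurableSpace X] (d : X → X → ℝ)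
    (μ : Measure X) (x : X) : ℝ≥0∞ :=
  if ∃ ε > 0, μ {y | d x y < ε} = 0 then ⊤
  else limsup (fun ε : ℝ =>
    ENNReal.ofReal (Real.log (μ {y | d x y < ε}).toReal / Real.log ε)) (𝓝[>] (0 : ℝ))

/-- The ratio `log τ_r(x) / (- log r)`, where `τ_r(x) = inf {n ≥ 1 | Tⁿ x ∈ B̄(x,r)}` is the
first return time of `x` to the closed ball `B̄(x,r)`; by convention it is `∞` when the
return time is infinite. -/
def recRatio {X : Type*} (d : X → X → ℝ) (T : X → X) (x : X) (r : ℝ) : ℝ≥0∞ :=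
  if ∃ n : ℕ, 1 ≤ n ∧ d (T^[n] x) x ≤ r then
    ENNReal.ofReal
      (Real.log ((sInf {n : ℕ | 1 ≤ n ∧ d (T^[n] x) x ≤ r} : ℕ) : ℝ) / (- Real.log r))
  else ⊤

/-- Lower recurrence rate `R̲(x) = liminf_{r → 0⁺} log τ_r(x) / (- log r)`. -/
def lowerRecRate {X : Type*} (d : X → X → ℝ) (T : X → X) (x : X) : ℝ≥0∞ :=
  liminf (recRatio d T x) (𝓝[>] (0 : ℝ))

/-- Upper recurrence rate `R̄(x) = limsup_{r → 0⁺} log τ_r(x) / (- log r)`. -/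
def upperRecRate {X : Type*} (d : X → X → ℝ) (T : X → X) (x : X) : ℝ≥0∞ :=
  limsup (recRatio d T x) (𝓝[>] (0 : ℝ))

/-- The ratio `log τ_r(x,y) / (- log r)`, where `τ_r(x,y) = inf {n ≥ 1 | Tⁿ x ∈ B̄(y,r)}` is the
first entrance time of the orbit of `x` into the closed ball `B̄(y,r)`; by convention `∞`
when the entrance time is infinite. -/
def waitRatio {X : Type*} (d : X → X → ℝ) (T : X → X) (x y : X) (r : ℝ) : ℝ≥0∞ :=
  if ∃ n : ℕ, 1 ≤ n ∧ d (T^[n] x) y ≤ r then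
    ENNReal.ofReal
      (Real.log ((sInf {n : ℕ | 1 ≤ n ∧ d (T^[n] x) y ≤ r} : ℕ) : ℝ) / (- Real.log r))
  else ⊤

/-- Lower quantitative waiting time indicator `R̲(x,y)`. -/
def lowerWaitRate {X : Type*} (d : X → X → ℝ) (T : X → X) (x y : X) : ℝ≥0∞ :=
  liminf (waitRatio d T x y) (𝓝[>] (0 : ℝ))

/-- Upper quantitative waiting time indicator `R̄(x,y)`. -/
def upperWaitRate {X : Type*} (d : X → X → ℝ) (T : X → X) (x y : X) : ℝ≥0∞ :=
  limsup (waitRatio d T x y) (𝓝[>] (0 : ℝ))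

/-- The entropy `H(P) = ∑_c -μ(P_c) log μ(P_c)` of the finite measurable partition
`P_c = f ⁻¹ {c}` of `X` induced by a map `f` into a finite set. -/
def partitionEntropy {X F : Type*} [MeasurableSpace X] [Fintype F]
    (μ : Measure X) (f : X → F) : ℝ :=
  ∑ c : F, Real.negMulLog ((μ (f ⁻¹' {c})).toReal)

/-- The Kolmogorov–Sinai (measure-theoretic) entropy `h_μ(T)`: the supremum, over all finite
measurable partitions (coded by measurable maps `f : X → Fin k`), of the limit of
`H(⋁_{i<n} T⁻ⁱ P) / n`. -/
def kolmogorovSinaiEntropy {X : Type*} [MeasurableSpace X] (T : X → X) (μ : Measure X) :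
    ℝ≥0∞ :=
  ⨆ (k : ℕ) (f : X → Fin k) (_ : Measurable f),
    ENNReal.ofReal
      (liminf (fun n : ℕ =>
        partitionEntropy μ (fun x (i : Fin n) => f (T^[(i : ℕ)] x)) / n) atTop)

end

/-! `d̄_μ(x) ≥ α` means that for every rational `q ∈ (0, α)` there are arbitrarily small `ε` with
`μ(B(x, ε)) < ε ^ q`, and `d̲_μ(x) = 0` that for every rational `q > 0` there are arbitrarily small
`ε` with `μ(B(x, ε)) > ε ^ q`. Bounding `ε` by `1 / (n + 1)` turns each of these countably many
conditions into `x ∈ S ν` for a set `S ν` whose membership relation is open in `(ν, x)`: by the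
portmanteau theorem a strict inequality on `ν(B(x, ε))` survives small perturbations of `ν`, and
changing the radius slightly absorbs small moves of `x`. For such `S`, the Lindelöf property
makes `ν ↦ ν (S ν)` lower semicontinuous, so `{ν | ν (S ν) = 1}` is a `Gδ` set. -/

theorem LowerSemicontinuous.isGδ_setOf_le {α γ : Type*} [TopologicalSpace α] [LinearOrder γ]
    [TopologicalSpace γ] [OrderClosedTopology γ] [DenselyOrdered γ]
    [TopologicalSpace.SeparableSpace γ]
    {f : α → γ} (hf : LowerSemicontinuous f) (a : γ) : IsGδ {x | a ≤ f x} := by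
  obtain ⟨D, hDc, hD⟩ := TopologicalSpace.exists_countable_dense γ
  have hset : {x | a ≤ f x} = ⋂ b ∈ D ∩ Iio a, f ⁻¹' Ioi b := by
    ext x
    simp only [mem_ofPred_eq, mem_iInter₂, mem_inter_iff, mem_Iio, mem_preimage, mem_Ioi]
    refine ⟨fun h b hb => hb.2.trans_le h, fun h => not_lt.1 fun hlt => ?_⟩
    obtain ⟨b, hbD, hfb, hba⟩ := hD.exists_between hlt
    exact (h b ⟨hbD, hba⟩).not_gt hfb
  rw [hset]
  exact .biInter_of_isOpen (hDc.mono inter_subset_left) fun b _ => hf.isOpen_preimage b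

namespace MeasureTheory.ProbabilityMeasure

variable {Ω : Type*} [TopologicalSpace Ω] [MeasurableSpace Ω] [OpensMeasurableSpace Ω]
  [HasOuterApproxClosed Ω]

theorem lowerSemicontinuous_measure_of_isOpen {G : Set Ω} (hG : IsOpen G) :
    LowerSemicontinuous fun ν : ProbabilityMeasure Ω => ν.toMeasure G :=
  lowerSemicontinuous_iff_le_liminf.2 fun _ => le_liminf_measure_open_of_tendsto tendsto_id hG

theorem upperSemicontinuous_measure_of_isClosed {F : Set Ω} (hF : IsClosed F) :
    UpperSemicontinuous fun ν : ProbabilityMeasure Ω => ν.toMeasure F :=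
  upperSemicontinuous_iff_limsup_le.2 fun _ => limsup_measure_closed_le_of_tendsto tendsto_id hF

variable [SecondCountableTopology Ω] {S : ProbabilityMeasure Ω → Set Ω}

theorem lowerSemicontinuous_measure_of_isOpen_setOf_mem
    (hS : IsOpen {p : ProbabilityMeasure Ω × Ω | p.2 ∈ S p.1}) :
    LowerSemicontinuous fun ν : ProbabilityMeasure Ω => ν.toMeasure (S ν) := by
  intro μ c (hc : c < μ.toMeasure (S μ))
  have hSμ : IsOpen (S μ) := hS.preimage (Continuous.prodMk_right μ)
  lift c to ℝ≥0 using ne_top_of_lt hc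
  rw [← ennreal_coeFn_eq_coeFn_toMeasure, ENNReal.coe_lt_coe] at hc
  show ∀ᶠ ν in 𝓝 μ, (c : ℝ≥0∞) < ν.toMeasure (S ν)
  set 𝒲 : Set (Set Ω) := {W | IsOpen W ∧ (W ⊆ S μ → ∀ᶠ ν in 𝓝 μ, W ⊆ S ν)}
  -- An open set that is not inside `S μ` belongs to `𝒲` vacuously, which is what makes `𝒲`
  -- fine enough around every point of `Ω`.
  have h𝒲 : ∀ u, IsOpen u → ∀ x ∈ u, ∃ W ∈ 𝒲, W ∈ 𝓝 x ∧ W ⊆ u := by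
    intro u hu x hx
    by_cases hxS : x ∈ S μ
    · obtain ⟨V, hV, W, hW, hVW⟩ := mem_nhds_prod_iff.1 (hS.mem_nhds (x := (μ, x)) hxS)
      obtain ⟨W', hW'W, hW'o, hxW'⟩ := mem_nhds_iff.1 hW
      refine ⟨W' ∩ u, ⟨hW'o.inter hu, fun _ => ?_⟩,
        inter_mem (hW'o.mem_nhds hxW') (hu.mem_nhds hx), inter_subset_right⟩
      filter_upwards [hV] with ν hν y hy
      exact hVW (mk_mem_prod hν (hW'W hy.1))
    · exact ⟨u, ⟨hu, fun huS => absurd (huS hx) hxS⟩, hu.mem_nhds hx, subset_rfl⟩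
  obtain ⟨T, hT, hcT, hTS⟩ := μ.exists_lt_measure_biUnion_of_isOpen h𝒲 hSμ hc
  have hTopen : IsOpen (⋃ t ∈ T, t) := isOpen_biUnion fun t ht => (hT t ht).1
  rw [← ENNReal.coe_lt_coe, ennreal_coeFn_eq_coeFn_toMeasure] at hcT
  filter_upwards [(eventually_all_finset T).2 fun t ht =>
      (hT t ht).2 ((subset_biUnion_of_mem ht).trans hTS),
    lowerSemicontinuous_measure_of_isOpen hTopen μ c hcT] with ν hνT hν
  exact hν.trans_le (measure_mono (iUnion₂_subset hνT))

theorem isGδ_setOf_ae_mem (hS : IsOpen {p : ProbabilityMeasure Ω × Ω | p.2 ∈ S p.1}) :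
    IsGδ {ν : ProbabilityMeasure Ω | ∀ᵐ x ∂ν.toMeasure, x ∈ S ν} := by
  have hset : {ν : ProbabilityMeasure Ω | ∀ᵐ x ∂ν.toMeasure, x ∈ S ν} =
      {ν | 1 ≤ ν.toMeasure (S ν)} := by
    ext ν
    have hSν : IsOpen (S ν) := hS.preimage (Continuous.prodMk_right ν)
    rw [mem_ofPred_eq, mem_ofPred_eq, ae_iff_measure_eq (p := (· ∈ S ν))
      (hSν.measurableSet.nullMeasurableSet : NullMeasurableSet {x | x ∈ S ν} _),
      measure_univ, prob_le_one.ge_iff_eq, ofPred_mem_eq]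
  rw [hset]
  exact (lowerSemicontinuous_measure_of_isOpen_setOf_mem hS).isGδ_setOf_le 1

end MeasureTheory.ProbabilityMeasure

theorem ENNReal.ofReal_le_limsup_iff_forall_rat {ι : Type*} {f : Filter ι} {u : ι → ℝ≥0∞}
    {α : ℝ} :
    ENNReal.ofReal α ≤ limsup u f ↔
      ∀ q : ℚ, 0 < q → (q : ℝ) < α → ∃ᶠ i in f, ENNReal.ofReal q < u i := by
  rw [le_limsup_iff]
  refine ⟨fun h q hq hqα =>
    h _ (ENNReal.ofReal_lt_ofReal_iff'.2 ⟨hqα, (Rat.cast_pos.2 hq).trans hqα⟩), fun h y hy => ?_⟩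
  obtain ⟨q, -, hyq, hqα⟩ := ENNReal.lt_iff_exists_rat_btwn.1 hy
  have hq : (0 : ℝ) < q := Real.toNNReal_pos.1 (ENNReal.coe_pos.1 (zero_le.trans_lt hyq))
  exact (h q (Rat.cast_pos.1 hq) (ENNReal.ofReal_lt_ofReal_iff'.1 hqα).1).mono
    fun i hi => hyq.trans hi

theorem ENNReal.liminf_eq_zero_iff_forall_rat {ι : Type*} {f : Filter ι} {u : ι → ℝ≥0∞} :
    liminf u f = 0 ↔ ∀ q : ℚ, 0 < q → ∃ᶠ i in f, u i < ENNReal.ofReal q := by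
  rw [← nonpos_iff_eq_zero, liminf_le_iff]
  refine ⟨fun h q hq => h _ (ENNReal.ofReal_pos.2 (Rat.cast_pos.2 hq)), fun h y hy => ?_⟩
  obtain ⟨q, -, hq, hqy⟩ := ENNReal.lt_iff_exists_rat_btwn.1 hy
  exact (h q (Rat.cast_pos.1 (Real.toNNReal_pos.1 (ENNReal.coe_pos.1 hq)))).mono
    fun i hi => hi.trans hqy

theorem Real.lt_log_div_log_iff {m ε q : ℝ} (hm : 0 < m) (hε₀ : 0 < ε) (hε₁ : ε < 1) :
    q < log m / log ε ↔ m < ε ^ q := by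
  rw [lt_div_iff_of_neg (log_neg hε₀ hε₁), ← log_rpow hε₀,
    log_lt_log_iff hm (rpow_pos_of_pos hε₀ q)]

theorem Real.log_div_log_lt_iff {m ε q : ℝ} (hm : 0 < m) (hε₀ : 0 < ε) (hε₁ : ε < 1) :
    log m / log ε < q ↔ ε ^ q < m := by
  rw [div_lt_iff_of_neg (log_neg hε₀ hε₁), ← log_rpow hε₀,
    log_lt_log_iff (rpow_pos_of_pos hε₀ q) hm]

theorem frequently_nhdsGT_zero_iff_forall_nat {P : ℝ → Prop} :
    (∃ᶠ ε in 𝓝[>] (0 : ℝ), P ε) ↔ ∀ n : ℕ, ∃ ε ∈ Ioo 0 (1 / ((n : ℝ) + 1)), P ε := by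
  rw [(nhdsGT_basis 0).frequently_iff]
  refine ⟨fun h n => h _ Nat.one_div_pos_of_nat, fun h δ hδ => ?_⟩
  obtain ⟨n, hn⟩ := exists_nat_one_div_lt hδ
  obtain ⟨ε, hε, hPε⟩ := h n
  exact ⟨ε, ⟨hε.1, hε.2.trans hn⟩, hPε⟩

theorem Metric.setOf_dist_lt_eq_ball {X : Type*} [PseudoMetricSpace X] (x : X) (ε : ℝ) :
    {y | dist x y < ε} = ball x ε :=
  ext fun _ => mem_ball'.symm

section LocalDimension

variable {X : Type*} [PseudoMetricSpace X] [MeasurableSpace X] {μ : Measure X} {x : X}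

theorem eventually_measure_ball_eq_zero (h : ∃ ε > 0, μ (ball x ε) = 0) :
    ∀ᶠ ε in 𝓝[>] (0 : ℝ), μ (ball x ε) = 0 := by
  obtain ⟨ε₀, hε₀, h₀⟩ := h
  filter_upwards [Ioo_mem_nhdsGT hε₀] with ε hε
  exact measure_mono_null (ball_subset_ball hε.2.le) h₀

variable [IsFiniteMeasure μ]

theorem eventually_ofReal_lt_log_div_log_iff (h : ∀ ε > 0, μ (ball x ε) ≠ 0) {q : ℝ}
    (hq : 0 < q) :
    ∀ᶠ ε in 𝓝[>] (0 : ℝ), ENNReal.ofReal q < ENNReal.ofReal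
      (Real.log (μ (ball x ε)).toReal / Real.log ε) ↔ μ (ball x ε) < ENNReal.ofReal (ε ^ q) := by
  filter_upwards [Ioo_mem_nhdsGT one_pos] with ε ⟨hε₀, hε₁⟩
  rw [ENNReal.ofReal_lt_ofReal_iff_of_nonneg hq.le,
    Real.lt_log_div_log_iff (ENNReal.toReal_pos (h ε hε₀) (measure_ne_top μ _)) hε₀ hε₁,
    ENNReal.lt_ofReal_iff_toReal_lt (measure_ne_top μ _)]

theorem eventually_ofReal_log_div_log_lt_iff (h : ∀ ε > 0, μ (ball x ε) ≠ 0) {q : ℝ}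
    (hq : 0 < q) :
    ∀ᶠ ε in 𝓝[>] (0 : ℝ), ENNReal.ofReal (Real.log (μ (ball x ε)).toReal / Real.log ε) <
      ENNReal.ofReal q ↔ ENNReal.ofReal (ε ^ q) < μ (ball x ε) := by
  filter_upwards [Ioo_mem_nhdsGT one_pos] with ε ⟨hε₀, hε₁⟩
  rw [ENNReal.ofReal_lt_ofReal_iff hq,
    Real.log_div_log_lt_iff (ENNReal.toReal_pos (h ε hε₀) (measure_ne_top μ _)) hε₀ hε₁,
    ENNReal.ofReal_lt_iff_lt_toReal (Real.rpow_nonneg hε₀.le q) (measure_ne_top μ _)]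

theorem ofReal_le_upperLocalDim_dist_iff {α : ℝ} :
    ENNReal.ofReal α ≤ upperLocalDim dist μ x ↔ ∀ q : ℚ, 0 < q → (q : ℝ) < α →
      ∃ᶠ ε in 𝓝[>] (0 : ℝ), μ (ball x ε) < ENNReal.ofReal (ε ^ (q : ℝ)) := by
  rw [upperLocalDim]
  split_ifs with h <;> simp only [setOf_dist_lt_eq_ball] at h ⊢
  · simp only [le_top, true_iff]
    refine fun q _ _ =>
      ((eventually_measure_ball_eq_zero h).and self_mem_nhdsWithin).frequently.mono ?_
    rintro ε ⟨h₀, hε⟩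
    rw [h₀]
    exact ENNReal.ofReal_pos.2 (Real.rpow_pos_of_pos hε _)
  · push Not at h
    rw [ENNReal.ofReal_le_limsup_iff_forall_rat]
    exact forall₃_congr fun q hq _ =>
      frequently_congr (eventually_ofReal_lt_log_div_log_iff h (Rat.cast_pos.2 hq))

theorem lowerLocalDim_dist_eq_zero_iff :
    lowerLocalDim dist μ x = 0 ↔ ∀ q : ℚ, 0 < q →
      ∃ᶠ ε in 𝓝[>] (0 : ℝ), ENNReal.ofReal (ε ^ (q : ℝ)) < μ (ball x ε) := by
  rw [lowerLocalDim]
  split_ifs with h <;> simp only [setOf_dist_lt_eq_ball] at h ⊢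
  · simp only [ENNReal.top_ne_zero, false_iff, not_forall, not_frequently]
    exact ⟨1, one_pos, (eventually_measure_ball_eq_zero h).mono fun ε h₀ => by simp [h₀]⟩
  · push Not at h
    rw [ENNReal.liminf_eq_zero_iff_forall_rat]
    exact forall₂_congr fun q hq =>
      frequently_congr (eventually_ofReal_log_div_log_lt_iff h (Rat.cast_pos.2 hq))

end LocalDimension

section BallCenters

variable {X : Type*} [PseudoMetricSpace X] [MeasurableSpace X]

def lightBallCenters (μ : Measure X) (β δ : ℝ) : Set X :=
  {x | ∃ ε ∈ Ioo 0 δ, μ (ball x ε) < ENNReal.ofReal (ε ^ β)}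

def heavyBallCenters (μ : Measure X) (β δ : ℝ) : Set X :=
  {x | ∃ ε ∈ Ioo 0 δ, ENNReal.ofReal (ε ^ β) < μ (ball x ε)}

variable [OpensMeasurableSpace X]

theorem isOpen_setOf_mem_lightBallCenters (β δ : ℝ) :
    IsOpen {p : ProbabilityMeasure X × X | p.2 ∈ lightBallCenters p.1.toMeasure β δ} := by
  refine isOpen_iff_mem_nhds.2 fun ⟨μ, x⟩ ⟨ε, ⟨hε₀, hεδ⟩, hμ⟩ => ?_
  have hcont : ContinuousAt (fun t : ℝ => ENNReal.ofReal (t ^ β)) ε :=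
    ENNReal.continuous_ofReal.continuousAt.comp
      (Real.continuousAt_rpow_const ε β (Or.inl hε₀.ne'))
  obtain ⟨a, hμa, ha₀, haε⟩ :
      ∃ a, μ.toMeasure (ball x ε) < ENNReal.ofReal (a ^ β) ∧ a ∈ Ioo 0 ε :=
    (((hcont.eventually (lt_mem_nhds hμ)).filter_mono nhdsWithin_le_nhds).and
      (Ioo_mem_nhdsLT hε₀)).exists
  obtain ⟨b, hab, hbε⟩ := exists_between haε
  have hμb : μ.toMeasure (closedBall x b) < ENNReal.ofReal (a ^ β) :=
    (measure_mono (closedBall_subset_ball hbε)).trans_lt hμa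
  rw [nhds_prod_eq]
  filter_upwards [(ProbabilityMeasure.upperSemicontinuous_measure_of_isClosed
      isClosed_closedBall μ _ hμb).prod_mk (ball_mem_nhds x (sub_pos.2 hab))] with ⟨ν, y⟩ ⟨hν, hy⟩
  refine ⟨a, ⟨ha₀, haε.trans hεδ⟩, (measure_mono fun z hz => ?_).trans_lt hν⟩
  simp only [mem_ball, mem_closedBall] at hz hy ⊢
  linarith [dist_triangle z y x]

theorem isOpen_setOf_mem_heavyBallCenters (β δ : ℝ) :
    IsOpen {p : ProbabilityMeasure X × X | p.2 ∈ heavyBallCenters p.1.toMeasure β δ} := by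
  refine isOpen_iff_mem_nhds.2 fun ⟨μ, x⟩ ⟨ε, ⟨hε₀, hεδ⟩, hμ⟩ => ?_
  have hcont : ContinuousAt (fun t : ℝ => ENNReal.ofReal (t ^ β)) ε :=
    ENNReal.continuous_ofReal.continuousAt.comp
      (Real.continuousAt_rpow_const ε β (Or.inl hε₀.ne'))
  obtain ⟨e, hμe, hεe, heδ⟩ :
      ∃ e, ENNReal.ofReal (e ^ β) < μ.toMeasure (ball x ε) ∧ e ∈ Ioo ε δ :=
    (((hcont.eventually (gt_mem_nhds hμ)).filter_mono nhdsWithin_le_nhds).and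
      (Ioo_mem_nhdsGT hεδ)).exists
  rw [nhds_prod_eq]
  filter_upwards [(ProbabilityMeasure.lowerSemicontinuous_measure_of_isOpen
      isOpen_ball μ _ hμe).prod_mk (ball_mem_nhds x (sub_pos.2 hεe))] with ⟨ν, y⟩ ⟨hν, hy⟩
  refine ⟨e, ⟨hε₀.trans hεe, heδ⟩, hν.trans_le (measure_mono fun z hz => ?_)⟩
  simp only [mem_ball] at hz hy ⊢
  linarith [dist_triangle z x y, dist_comm x y]

end BallCenters

theorem localDim_measure_sets_Gδ_general {X : Type*} [MetricSpace X]
    [TopologicalSpace.SeparableSpace X] [MeasurableSpace X] [BorelSpace X]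
    (α : ℝ) :
    IsGδ {μ : ProbabilityMeasure X |
        ∀ᵐ x ∂μ.toMeasure, ENNReal.ofReal α ≤ upperLocalDim dist μ.toMeasure x} ∧
    IsGδ {μ : ProbabilityMeasure X |
        ∀ᵐ x ∂μ.toMeasure, lowerLocalDim dist μ.toMeasure x = 0} := by
  constructor
  · have hlight (q : ℚ) (n : ℕ) : IsGδ {ν : ProbabilityMeasure X |
        ∀ᵐ x ∂ν.toMeasure, x ∈ lightBallCenters ν.toMeasure q (1 / (n + 1))} :=
      ProbabilityMeasure.isGδ_setOf_ae_mem (isOpen_setOf_mem_lightBallCenters _ _)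
    convert IsGδ.iInter fun q : ℚ => IsGδ.iInter fun _ : 0 < q ∧ (q : ℝ) < α =>
      IsGδ.iInter (hlight q) using 1
    ext μ
    simp only [mem_ofPred_eq, mem_iInter, ofReal_le_upperLocalDim_dist_iff,
      frequently_nhdsGT_zero_iff_forall_nat, ae_all_iff, eventually_imp_distrib_left, and_imp]
    rfl
  · have hheavy (q : ℚ) (n : ℕ) : IsGδ {ν : ProbabilityMeasure X |
        ∀ᵐ x ∂ν.toMeasure, x ∈ heavyBallCenters ν.toMeasure q (1 / (n + 1))} :=
      ProbabilityMeasure.isGδ_setOf_ae_mem (isOpen_setOf_mem_heavyBallCenters _ _)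
    convert IsGδ.iInter fun q : ℚ => IsGδ.iInter fun _ : 0 < q => IsGδ.iInter (hheavy q) using 1
    ext μ
    simp only [mem_ofPred_eq, mem_iInter, lowerLocalDim_dist_eq_zero_iff,
      frequently_nhdsGT_zero_iff_forall_nat, ae_all_iff, eventually_imp_distrib_left]
    rfl

/-- Let `X` be a Polish metric space and `M(X)` the space of Borel
probability measures with the weak topology. For every `α > 0`, the set of `μ` with
`d̄_μ(x) ≥ α` for `μ`-a.e. `x` (i.e. `dim_P^-(μ) ≥ α`) is a `Gδ` subset of `M(X)`, and the
set of `μ` with `d̲_μ(x) = 0` for `μ`-a.e. `x` (i.e. `dim_H(μ) = 0`) is a `Gδ` subset of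
`M(X)`. -/
theorem localDim_measure_sets_Gδ {X : Type*} [MetricSpace X] [CompleteSpace X]
    [TopologicalSpace.SeparableSpace X] [MeasurableSpace X] [BorelSpace X]
    (α : ℝ) (hα : 0 < α) :
    IsGδ {μ : ProbabilityMeasure X |
        ∀ᵐ x ∂μ.toMeasure, ENNReal.ofReal α ≤ upperLocalDim dist μ.toMeasure x} ∧
    IsGδ {μ : ProbabilityMeasure X |
        ∀ᵐ x ∂μ.toMeasure, lowerLocalDim dist μ.toMeasure x = 0} :=
  localDim_measure_sets_Gδ_general α
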